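/- arXiv:1112.5064 — 2 statements merged into one kernel-verified Lean document; each statement's English description precedes it below -/
import Mathlib

section
/- For integers n ≥ 1 and 1 ≤ k < n, the state |Φ₀ⁿ⟩ satisfies the tensor decomposition |Φ₀ⁿ⟩ = (1/√2)(|Φ₀ᵏ⟩⊗|Φ₀^{n−k}⟩ − |Φ₁ᵏ⟩⊗|Φ₁^{n−k}⟩), as vectors in (ℂ²)^{⊗n} ≅ (ℂ²)^{⊗k} ⊗ (ℂ²)^{⊗(n−k)}. -/
/-!
The sign patterns in `Φ₀ⁿ` and `Φ₁ⁿ` are the real and imaginary parts of `i ^ Δ(y)`. Since the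
Hamming weight is additive under concatenation, the decomposition is the identity
`Re (i^a i^b) = Re i^a Re i^b - Im i^a Im i^b`, the factor `1/√2` balancing the normalizations
`√2^(k+m-1) = √2 · √2^(k-1) · √2^(m-1)`.
-/

/-- Hamming weight of a bit string. -/
def hammingWeight {n : ℕ} (y : Fin n → Bool) : ℕ :=
  (Finset.univ.filter (fun i => y i = true)).card

/-- The state `|Φ₀ⁿ⟩`, given by its amplitudes on the computational basis. -/
noncomputable def Phi0 (n : ℕ) : (Fin n → Bool) → ℂ := fun y =>
  (((Real.sqrt 2) ^ (n - 1))⁻¹ : ℝ) *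
    (if hammingWeight y % 4 = 0 then 1 else if hammingWeight y % 4 = 2 then -1 else 0)

/-- The state `|Φ₁ⁿ⟩`, given by its amplitudes on the computational basis. -/
noncomputable def Phi1 (n : ℕ) : (Fin n → Bool) → ℂ := fun y =>
  (((Real.sqrt 2) ^ (n - 1))⁻¹ : ℝ) *
    (if hammingWeight y % 4 = 1 then 1 else if hammingWeight y % 4 = 3 then -1 else 0)

open Complex

lemma hammingWeight_append {k m : ℕ} (u : Fin k → Bool) (v : Fin m → Bool) :
    hammingWeight (Fin.append u v) = hammingWeight u + hammingWeight v := by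
  unfold hammingWeight
  rw [Finset.card_filter, Finset.card_filter, Finset.card_filter, Fin.sum_univ_add]
  simp [Fin.append_left, Fin.append_right]

lemma ofReal_re_I_pow (w : ℕ) :
    (((I ^ w).re : ℝ) : ℂ) = if w % 4 = 0 then 1 else if w % 4 = 2 then -1 else 0 := by
  rw [I_pow_eq_pow_mod]
  have : w % 4 < 4 := Nat.mod_lt _ (by norm_num)
  interval_cases w % 4 <;> simp [pow_succ]

lemma ofReal_im_I_pow (w : ℕ) :
    (((I ^ w).im : ℝ) : ℂ) = if w % 4 = 1 then 1 else if w % 4 = 3 then -1 else 0 := by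
  rw [I_pow_eq_pow_mod]
  have : w % 4 < 4 := Nat.mod_lt _ (by norm_num)
  interval_cases w % 4 <;> simp [pow_succ]

lemma Phi0_eq_re_I_pow (n : ℕ) (y : Fin n → Bool) :
    Phi0 n y = (((Real.sqrt 2 ^ (n - 1))⁻¹ * (I ^ hammingWeight y).re : ℝ) : ℂ) := by
  rw [Phi0, ofReal_mul, ofReal_re_I_pow]

lemma Phi1_eq_im_I_pow (n : ℕ) (y : Fin n → Bool) :
    Phi1 n y = (((Real.sqrt 2 ^ (n - 1))⁻¹ * (I ^ hammingWeight y).im : ℝ) : ℂ) := by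
  rw [Phi1, ofReal_mul, ofReal_im_I_pow]

lemma sqrt_two_pow_add_sub_one {k m : ℕ} (hk : 1 ≤ k) (hm : 1 ≤ m) :
    Real.sqrt 2 ^ (k + m - 1) = Real.sqrt 2 * (Real.sqrt 2 ^ (k - 1) * Real.sqrt 2 ^ (m - 1)) := by
  rw [← pow_add, ← pow_succ']
  congr 1
  omega

/-- For `1 ≤ k` and `1 ≤ m` (i.e. `n = k + m` with `1 ≤ k < n`), one has the tensor
decomposition `|Φ₀ⁿ⟩ = (1/√2)(|Φ₀ᵏ⟩⊗|Φ₀ᵐ⟩ − |Φ₁ᵏ⟩⊗|Φ₁ᵐ⟩)`, stated amplitude-wise via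
the identification `(ℂ²)^{⊗(k+m)} ≅ (ℂ²)^{⊗k} ⊗ (ℂ²)^{⊗m}` given by `Fin.append`. -/
theorem phi0_tensor_decomposition (k m : ℕ) (hk : 1 ≤ k) (hm : 1 ≤ m)
    (u : Fin k → Bool) (v : Fin m → Bool) :
    Phi0 (k + m) (Fin.append u v) =
      ((Real.sqrt 2 : ℝ) : ℂ)⁻¹ * (Phi0 k u * Phi0 m v - Phi1 k u * Phi1 m v) := by
  simp only [Phi0_eq_re_I_pow, Phi1_eq_im_I_pow, hammingWeight_append, pow_add, mul_re,
    sqrt_two_pow_add_sub_one hk hm]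
  push_cast
  ring
end

section
/- Let φ₀, φ₁ be orthonormal vectors in a finite-dimensional Hilbert space H_A, let σ = (1/2)(|φ₀⟩⟨φ₀| + |φ₁⟩⟨φ₁|), and let ρ be any density operator on H_A whose compression to span{φ₀,φ₁} is the matrix [[p, √(pq)cosθ],[√(pq)cosθ, q]] in the basis (φ₀,φ₁), with p,q ≥ 0, p+q ≤ 1, θ ∈ [0,π/2]. Then the fidelity satisfies F(σ,ρ)² = tr(√(√σ ρ √σ))² = (p + q + 2√(pq)·sin θ)/2. -/
open ComplexOrder Matrix

/-- Positive semidefinite square root of a matrix (junk value `0` off the PSD cone). -/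
noncomputable def matSqrt {n : ℕ} (A : Matrix (Fin n) (Fin n) ℂ) : Matrix (Fin n) (Fin n) ℂ := by
  classical exact if h : A.PosSemidef then
    (h.1.eigenvectorUnitary : Matrix (Fin n) (Fin n) ℂ) *
      diagonal ((↑) ∘ (Real.sqrt ·) ∘ h.1.eigenvalues) *
      (star h.1.eigenvectorUnitary : Matrix (Fin n) (Fin n) ℂ) else 0

/-- Fidelity `F(σ,ρ) = tr √(√σ ρ √σ)` of two (PSD) matrices. -/
noncomputable def fidelity {n : ℕ} (σ ρ : Matrix (Fin n) (Fin n) ℂ) : ℝ :=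
  (Matrix.trace (matSqrt (matSqrt σ * ρ * matSqrt σ))).re

/-!
Writing `V` for the `N × 2` isometry with columns `φ₀, φ₁`, we have `σ = V (½ I) Vᴴ`, and the
fidelity is invariant under such an isometric embedding: `F(V σ' Vᴴ, ρ) = F(σ', Vᴴ ρ V)`, because
`√(V X Vᴴ) = V √X Vᴴ`. This reduces the claim to `F(½ I, C) = √½ · tr √C` for the `2 × 2`
compression `C = [[p, r], [r, q]]`, `r = √(pq) cos θ`. By Cayley–Hamilton,
`√C = (C + √(det C) I) / √(tr C + 2 √(det C))`, so `tr √C = √(tr C + 2 √(det C))`, and here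
`det C = pq sin² θ`.
-/

namespace Matrix

theorem conjTranspose_mul_mul_transpose_of {R m n : Type*} [Fintype n] [CommSemiring R]
    [StarRing R] (φ : m → n → R) (A : Matrix n n R) :
    (of φ)ᵀᴴ * A * (of φ)ᵀ = of fun i j => star (φ i) ⬝ᵥ A *ᵥ φ j := by
  ext i j
  simp only [Matrix.mul_apply, conjTranspose_apply, transpose_apply, of_apply, dotProduct, mulVec,
    Finset.mul_sum, Finset.sum_mul, mul_assoc, Pi.star_apply]
  exact Finset.sum_comm

theorem transpose_of_mul_conjTranspose {R m n : Type*} [Fintype m] [CommSemiring R]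
    [StarRing R] (φ : m → n → R) :
    (of φ)ᵀ * (of φ)ᵀᴴ = ∑ k, vecMulVec (φ k) (star (φ k)) := by
  ext i j
  simp [Matrix.mul_apply, vecMulVec_apply, Matrix.sum_apply]

theorem mul_self_fin_two {R : Type*} [CommRing R] (C : Matrix (Fin 2) (Fin 2) R) :
    C * C = C.trace • C - C.det • 1 := by
  ext i j
  fin_cases i <;> fin_cases j <;>
    simp [Matrix.mul_apply, trace_fin_two, det_fin_two, Fin.sum_univ_two] <;> ring

end Matrix

section matSqrt

variable {n m : ℕ} {A B : Matrix (Fin n) (Fin n) ℂ}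

open scoped MatrixOrder in
theorem matSqrt_eq_cfcSqrt (hA : A.PosSemidef) : matSqrt A = CFC.sqrt A := by
  rw [CFC.sqrt_eq_real_sqrt A hA.nonneg, cfcₙ_eq_cfc, hA.1.cfc_eq, matSqrt, dif_pos hA,
    IsHermitian.cfc, Unitary.conjStarAlgAut_apply]
  rfl

open scoped MatrixOrder in
theorem Matrix.PosSemidef.matSqrt (hA : A.PosSemidef) : (matSqrt A).PosSemidef := by
  rw [matSqrt_eq_cfcSqrt hA, ← nonneg_iff_posSemidef]
  exact CFC.sqrt_nonneg A

open scoped MatrixOrder in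
theorem matSqrt_mul_self (hA : A.PosSemidef) : matSqrt A * matSqrt A = A := by
  rw [matSqrt_eq_cfcSqrt hA]
  exact CFC.sqrt_mul_sqrt_self A hA.nonneg

open scoped MatrixOrder in
theorem matSqrt_eq_of_mul_self (hB : B.PosSemidef) (h : B * B = A) : matSqrt A = B := by
  have hA : A.PosSemidef := by
    simpa only [hB.1.eq, h] using posSemidef_conjTranspose_mul_self B
  rw [matSqrt_eq_cfcSqrt hA]
  exact CFC.sqrt_unique h hB.nonneg

theorem matSqrt_one : matSqrt (1 : Matrix (Fin n) (Fin n) ℂ) = 1 :=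
  matSqrt_eq_of_mul_self PosSemidef.one (Matrix.one_mul 1)

theorem matSqrt_smul {c : ℝ} (hc : 0 ≤ c) (hA : A.PosSemidef) :
    matSqrt (c • A) = √c • matSqrt A := by
  refine matSqrt_eq_of_mul_self (hA.matSqrt.smul (Real.sqrt_nonneg c)) ?_
  rw [smul_mul_smul, Real.mul_self_sqrt hc, matSqrt_mul_self hA]

theorem matSqrt_conj_isometry {V : Matrix (Fin n) (Fin m) ℂ} (hV : Vᴴ * V = 1)
    {C : Matrix (Fin m) (Fin m) ℂ} (hC : C.PosSemidef) :
    matSqrt (V * C * Vᴴ) = V * matSqrt C * Vᴴ := by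
  refine matSqrt_eq_of_mul_self (hC.matSqrt.mul_mul_conjTranspose_same V) ?_
  calc V * matSqrt C * Vᴴ * (V * matSqrt C * Vᴴ)
      = V * (matSqrt C * (Vᴴ * V) * matSqrt C) * Vᴴ := by simp only [Matrix.mul_assoc]
    _ = V * C * Vᴴ := by rw [hV, Matrix.mul_one, matSqrt_mul_self hC]

theorem matSqrt_fin_two {C : Matrix (Fin 2) (Fin 2) ℂ} (hC : C.PosSemidef) {t d : ℝ}
    (ht : C.trace = t) (hd : C.det = d) :
    matSqrt C = (√(t + 2 * √d))⁻¹ • (C + √d • 1) := by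
  have hd0 : 0 ≤ d := by exact_mod_cast hd ▸ hC.det_nonneg
  have ht0 : 0 ≤ t := by exact_mod_cast ht ▸ hC.trace_nonneg
  set u := t + 2 * √d with hu_def
  refine matSqrt_eq_of_mul_self ((hC.add (PosSemidef.one.smul (Real.sqrt_nonneg d))).smul
    (inv_nonneg.2 (Real.sqrt_nonneg u))) ?_
  by_cases hu : u = 0
  -- then `tr C = 0`, so `C = 0`, and the junk value `0⁻¹ = 0` makes the formula still hold
  · have htr : C.trace = 0 := by
      rw [ht]; exact_mod_cast (by nlinarith [Real.sqrt_nonneg d] : t = 0)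
    have hsu : (√u)⁻¹ = 0 := by simp [hu]
    rw [hsu, zero_smul, Matrix.zero_mul, eq_comm, ← hC.trace_eq_zero_iff, htr]
  · have hsq : (C + √d • 1) * (C + √d • 1) = u • C := by
      rw [add_mul, mul_add, mul_add, mul_self_fin_two, ht, hd, ← Complex.coe_smul,
        ← Complex.coe_smul]
      simp only [Matrix.mul_smul, Matrix.smul_mul, Matrix.mul_one, Matrix.one_mul, smul_smul,
        hu_def]
      match_scalars
      · ring
      · have : ((√d : ℝ) : ℂ) * √d = d := by exact_mod_cast Real.mul_self_sqrt hd0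
        linear_combination this
    rw [smul_mul_smul, hsq, smul_smul, ← mul_inv, Real.mul_self_sqrt (by positivity),
      inv_mul_cancel₀ hu, one_smul]

theorem trace_matSqrt_fin_two {C : Matrix (Fin 2) (Fin 2) ℂ} (hC : C.PosSemidef) {t d : ℝ}
    (ht : C.trace = t) (hd : C.det = d) : (matSqrt C).trace = √(t + 2 * √d) := by
  have hu : 0 ≤ t + 2 * √d := by
    have : 0 ≤ t := by exact_mod_cast ht ▸ hC.trace_nonneg
    positivity
  have key : (√(t + 2 * √d))⁻¹ * (t + 2 * √d) = √(t + 2 * √d) := by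
    rw [← div_eq_inv_mul, Real.div_sqrt]
  rw [matSqrt_fin_two hC ht hd, trace_smul, trace_add, trace_smul, trace_one, ht,
    Fintype.card_fin, Complex.real_smul, Complex.real_smul]
  conv_rhs => rw [← key]
  push_cast
  ring

end matSqrt

section fidelity

variable {n m : ℕ}

theorem fidelity_conj_isometry {V : Matrix (Fin n) (Fin m) ℂ} (hV : Vᴴ * V = 1)
    {σ : Matrix (Fin m) (Fin m) ℂ} {ρ : Matrix (Fin n) (Fin n) ℂ} (hσ : σ.PosSemidef)
    (hρ : ρ.PosSemidef) : fidelity (V * σ * Vᴴ) ρ = fidelity σ (Vᴴ * ρ * V) := by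
  have hX : (matSqrt σ * (Vᴴ * ρ * V) * matSqrt σ).PosSemidef := by
    simpa only [hσ.matSqrt.1.eq] using
      (hρ.conjTranspose_mul_mul_same V).mul_mul_conjTranspose_same (matSqrt σ)
  have hsandwich : V * matSqrt σ * Vᴴ * ρ * (V * matSqrt σ * Vᴴ) =
      V * (matSqrt σ * (Vᴴ * ρ * V) * matSqrt σ) * Vᴴ := by
    simp only [Matrix.mul_assoc]
  rw [fidelity, fidelity, matSqrt_conj_isometry hV hσ, hsandwich, matSqrt_conj_isometry hV hX,
    trace_mul_cycle, hV, Matrix.one_mul]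

theorem fidelity_smul_one {c : ℝ} (hc : 0 ≤ c) {ρ : Matrix (Fin n) (Fin n) ℂ}
    (hρ : ρ.PosSemidef) : fidelity (c • 1) ρ = √c * (trace (matSqrt ρ)).re := by
  rw [fidelity, matSqrt_smul hc PosSemidef.one, matSqrt_one, smul_mul_assoc, Matrix.one_mul,
    Matrix.mul_smul, Matrix.mul_one, smul_smul, Real.mul_self_sqrt hc, matSqrt_smul hc hρ,
    trace_smul, Complex.smul_re, smul_eq_mul]

end fidelity

theorem fidelity_compression_general (N : ℕ) (φ₀ φ₁ : Fin N → ℂ)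
    (h₀ : star φ₀ ⬝ᵥ φ₀ = 1) (h₁ : star φ₁ ⬝ᵥ φ₁ = 1) (h01 : star φ₀ ⬝ᵥ φ₁ = 0)
    (ρ : Matrix (Fin N) (Fin N) ℂ) (hρ : ρ.PosSemidef)
    (p q θ : ℝ) (hp : 0 ≤ p) (hq : 0 ≤ q)
    (hθ₀ : 0 ≤ θ) (hθ₁ : θ ≤ Real.pi / 2)
    (hc00 : star φ₀ ⬝ᵥ ρ.mulVec φ₀ = (p : ℂ))
    (hc11 : star φ₁ ⬝ᵥ ρ.mulVec φ₁ = (q : ℂ))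
    (hc01 : star φ₀ ⬝ᵥ ρ.mulVec φ₁ = ((Real.sqrt (p * q) * Real.cos θ : ℝ) : ℂ))
    (hc10 : star φ₁ ⬝ᵥ ρ.mulVec φ₀ = ((Real.sqrt (p * q) * Real.cos θ : ℝ) : ℂ)) :
    (fidelity (((1 : ℂ) / 2) •
        (Matrix.vecMulVec φ₀ (star φ₀) + Matrix.vecMulVec φ₁ (star φ₁))) ρ) ^ 2 =
      (p + q + 2 * Real.sqrt (p * q) * Real.sin θ) / 2 := by
  set V : Matrix (Fin N) (Fin 2) ℂ := (of ![φ₀, φ₁])ᵀ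
  set r := √(p * q) * Real.cos θ
  set e := √(p * q) * Real.sin θ
  have he : 0 ≤ e := mul_nonneg (Real.sqrt_nonneg _)
    (Real.sin_nonneg_of_nonneg_of_le_pi hθ₀ (by linarith [Real.pi_pos]))
  have h10 : star φ₁ ⬝ᵥ φ₀ = 0 := by rw [star_dotProduct, h01, star_zero]
  have hV : Vᴴ * V = 1 := by
    rw [← Matrix.mul_one Vᴴ, conjTranspose_mul_mul_transpose_of]
    ext i j; fin_cases i <;> fin_cases j <;> simp [h₀, h₁, h01, h10]
  have hσ : ((1 : ℂ) / 2) • (vecMulVec φ₀ (star φ₀) + vecMulVec φ₁ (star φ₁)) =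
      V * ((1 / 2 : ℝ) • (1 : Matrix (Fin 2) (Fin 2) ℂ)) * Vᴴ := by
    rw [Matrix.mul_smul, Matrix.mul_one, Matrix.smul_mul, transpose_of_mul_conjTranspose,
      Fin.sum_univ_two, ← Complex.coe_smul]
    push_cast
    rfl
  have hC : Vᴴ * ρ * V = !![(p : ℂ), r; r, q] := by
    rw [conjTranspose_mul_mul_transpose_of]
    ext i j; fin_cases i <;> fin_cases j <;> simp [hc00, hc01, hc10, hc11]
  have hCpsd : (Vᴴ * ρ * V).PosSemidef := hρ.conjTranspose_mul_mul_same V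
  have htr : (Vᴴ * ρ * V).trace = ((p + q : ℝ) : ℂ) := by
    rw [hC, trace_fin_two_of]; push_cast; rfl
  have hdet : (Vᴴ * ρ * V).det = ((e ^ 2 : ℝ) : ℂ) := by
    have hpq : √(p * q) * √(p * q) = p * q := Real.mul_self_sqrt (mul_nonneg hp hq)
    rw [hC, det_fin_two_of]
    exact_mod_cast (by linear_combination -hpq - √(p * q) ^ 2 * Real.sin_sq_add_cos_sq θ :
      p * q - r * r = e ^ 2)
  rw [hσ, fidelity_conj_isometry hV (PosSemidef.one.smul (by norm_num)) hρ,
    fidelity_smul_one (by norm_num) hCpsd, trace_matSqrt_fin_two hCpsd htr hdet,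
    Complex.ofReal_re, Real.sqrt_sq he, mul_pow, Real.sq_sqrt (by norm_num),
    Real.sq_sqrt (by positivity)]
  ring

/-- For orthonormal `φ₀, φ₁`, `σ = (1/2)(|φ₀⟩⟨φ₀| + |φ₁⟩⟨φ₁|)`, and a density matrix `ρ`
whose compression to `span{φ₀,φ₁}` is `[[p, √(pq)cosθ],[√(pq)cosθ, q]]` (with `p,q ≥ 0`,
`p+q ≤ 1`, `θ ∈ [0,π/2]`), the fidelity satisfies `F(σ,ρ)² = (p + q + 2√(pq)·sin θ)/2`. -/
theorem fidelity_compression (N : ℕ) (φ₀ φ₁ : Fin N → ℂ)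
    (h₀ : star φ₀ ⬝ᵥ φ₀ = 1) (h₁ : star φ₁ ⬝ᵥ φ₁ = 1) (h01 : star φ₀ ⬝ᵥ φ₁ = 0)
    (ρ : Matrix (Fin N) (Fin N) ℂ) (hρ : ρ.PosSemidef) (hρtr : Matrix.trace ρ = 1)
    (p q θ : ℝ) (hp : 0 ≤ p) (hq : 0 ≤ q) (hpq : p + q ≤ 1)
    (hθ₀ : 0 ≤ θ) (hθ₁ : θ ≤ Real.pi / 2)
    (hc00 : star φ₀ ⬝ᵥ ρ.mulVec φ₀ = (p : ℂ))
    (hc11 : star φ₁ ⬝ᵥ ρ.mulVec φ₁ = (q : ℂ))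
    (hc01 : star φ₀ ⬝ᵥ ρ.mulVec φ₁ = ((Real.sqrt (p * q) * Real.cos θ : ℝ) : ℂ))
    (hc10 : star φ₁ ⬝ᵥ ρ.mulVec φ₀ = ((Real.sqrt (p * q) * Real.cos θ : ℝ) : ℂ)) :
    (fidelity (((1 : ℂ) / 2) •
        (Matrix.vecMulVec φ₀ (star φ₀) + Matrix.vecMulVec φ₁ (star φ₁))) ρ) ^ 2 =
      (p + q + 2 * Real.sqrt (p * q) * Real.sin θ) / 2 :=
  fidelity_compression_general N φ₀ φ₁ h₀ h₁ h01 ρ hρ p q θ hp hq hθ₀ hθ₁ hc00 hc11 hc01 hc10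
end
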